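/- In the Kingman n-coalescent, for a fixed set A with |A| = i, the expectation of the reciprocal of the final level satisfies E(1/J_A) ≤ 2/C(n,i), with the convention 1/J_A = 0 when J_A = ∞. -/

import Mathlib

open Finset

/-- A (purely topological) history of the Kingman `n`-coalescent: `c k` is the set of blocks
of the partition when `k` lineages remain; at each level `2 ≤ k ≤ n` a pair of blocks merges.
A history is uniformly distributed among all such merging histories. -/
def IsHistory (n : ℕ) (c : ℕ → Finset (Finset (Fin n))) : Prop :=
  (∀ k, k = 0 ∨ n < k → c k = ∅) ∧
  c n = Finset.univ.image (fun i => ({i} : Finset (Fin n))) ∧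
  ∀ k, 2 ≤ k → k ≤ n → ∃ B₁ ∈ c k, ∃ B₂ ∈ c k, B₁ ≠ B₂ ∧
    c (k - 1) = (c k \ {B₁, B₂}) ∪ {B₁ ∪ B₂}

/-- Probability of an event under the uniform distribution on coalescent histories. -/
noncomputable def histProb (n : ℕ) (E : (ℕ → Finset (Finset (Fin n))) → Prop) : ℝ :=
  ({c | IsHistory n c ∧ E c}.ncard : ℝ) / ({c | IsHistory n c}.ncard : ℝ)

/-- Expectation of a functional under the uniform distribution on coalescent histories. -/
noncomputable def histExp (n : ℕ) (f : (ℕ → Finset (Finset (Fin n))) → ℝ) : ℝ :=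
  (∑ᶠ c ∈ {c | IsHistory n c}, f c) / ({c | IsHistory n c}.ncard : ℝ)

/-- `KLevel A c` is the initial level of the branch supporting exactly the leaves in `A`:
the largest number of blocks `k` at which `A` is a block (`0` if `A` is never a block,
corresponding to the convention `K_A = ∞`). -/
noncomputable def KLevel {n : ℕ} (A : Finset (Fin n))
    (c : ℕ → Finset (Finset (Fin n))) : ℕ :=
  sSup {k | A ∈ c k}

/-- `JLevel A c` is the final level of the branch supporting exactly the leaves in `A`:
the largest level `j < K_A` at which `A` is not a block (`0` if no such branch exists,
corresponding to the convention `J_A = ∞`). -/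
noncomputable def JLevel {n : ℕ} (A : Finset (Fin n))
    (c : ℕ → Finset (Finset (Fin n))) : ℕ :=
  sSup {j | j < KLevel A c ∧ A ∉ c j}

/-!
Condition on the first merger. Start more generally from a partition `P` into `k + 1` blocks
such that every block meeting `A` lies inside `A`, and let `b` be the number of blocks inside `A`.
Merging two blocks inside `A`, or two blocks outside `A`, leads to the same situation with `k`
blocks and `b - 1`, resp. `b`, blocks inside `A`, and does not change `J_A`. Merging the block
`A` itself with another block gives `J_A = k`, and every other merger mixes `A` with its
complement, so that `A` is never a block and `1/J_A = 0`. Induction on `k` then gives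
`∑ 1/J_A ≤ 2/C(k,b) · #histories`; the step reduces to the identity
`C(b,2)/C(k,b-1) + C(k+1-b,2)/C(k,b) = (k-1)(k+1)/(2 C(k+1,b))`, plus a slack of
`(k+1)/C(k+1,b)` that is exactly what the mergers involving the block `A` need (then `b = 1`).
-/

namespace Coalescent

lemma card_filter_subset_le {α : Type*} [DecidableEq α] (s t : Finset α) (m : ℕ) :
    #((s.powersetCard m).filter (· ⊆ t)) ≤ (#t).choose m := by
  rw [← card_powersetCard]
  exact card_le_card fun Q hQ => mem_powersetCard.2
    ⟨(mem_filter.1 hQ).2, (mem_powersetCard.1 (mem_filter.1 hQ).1).2⟩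

lemma card_filter_mem_le {α : Type*} [DecidableEq α] {P : Finset α} {A : α} (hA : A ∈ P) :
    #((P.powersetCard 2).filter (A ∈ ·)) ≤ #P - 1 := by
  rw [← card_erase_of_mem hA]
  refine (card_le_card fun Q hQ => ?_).trans (card_image_le (f := fun B => ({A, B} : Finset α)))
  obtain ⟨hQ, hAQ⟩ := mem_filter.1 hQ
  obtain ⟨hQP, hQcard⟩ := mem_powersetCard.1 hQ
  obtain ⟨C, hC, hCA⟩ := exists_mem_ne (by omega : 1 < #Q) A
  refine mem_image.2 ⟨C, mem_erase.2 ⟨hCA, hQP hC⟩, ?_⟩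
  exact eq_of_subset_of_card_le (insert_subset_iff.2 ⟨hAQ, singleton_subset_iff.2 hC⟩)
    (by rw [hQcard, card_pair hCA.symm])

section Partition

variable {α : Type*}

structure IsPartition (P : Finset (Finset α)) : Prop where
  nonempty : ∀ B ∈ P, B.Nonempty
  pairwiseDisjoint : (P : Set (Finset α)).PairwiseDisjoint id

def IsSaturated (A : Finset α) (P : Finset (Finset α)) : Prop :=
  ∀ B ∈ P, ¬Disjoint B A → B ⊆ A

namespace IsPartition

variable {P : Finset (Finset α)} {A B D : Finset α}

lemma eq_of_subset (hP : IsPartition P) (hB : B ∈ P) (hD : D ∈ P) (h : B ⊆ D) : B = D :=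
  hP.pairwiseDisjoint.elim hB hD fun hdis =>
    (hP.nonempty B hB).ne_empty (disjoint_self.1 (hdis.mono_right h))

lemma isSaturated_of_mem (hP : IsPartition P) (hA : A ∈ P) : IsSaturated A P := fun _ hB h =>
  (hP.pairwiseDisjoint.elim hB hA h).le

end IsPartition

variable [DecidableEq α]

def merge (P Q : Finset (Finset α)) : Finset (Finset α) := insert (Q.sup id) (P \ Q)

lemma merge_pair (P : Finset (Finset α)) (B₁ B₂ : Finset α) :
    merge P {B₁, B₂} = P \ {B₁, B₂} ∪ {B₁ ∪ B₂} := by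
  rw [merge, Finset.sup_insert, Finset.sup_singleton, insert_eq, union_comm]
  rfl

namespace IsPartition

variable {P Q : Finset (Finset α)}

lemma sup_notMem (hP : IsPartition P) (hQ : Q ∈ P.powersetCard 2) : Q.sup id ∉ P := by
  obtain ⟨hQP, hQcard⟩ := mem_powersetCard.1 hQ
  obtain ⟨B₁, B₂, hne, rfl⟩ := card_eq_two.1 hQcard
  intro h
  replace h : B₁ ∪ B₂ ∈ P := by simpa using h
  have h₁ := hP.eq_of_subset (hQP (by simp)) h subset_union_left
  have h₂ := hP.eq_of_subset (hQP (by simp)) h subset_union_right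
  exact hne (h₁.trans h₂.symm)

lemma merge (hP : IsPartition P) (hQ : Q ∈ P.powersetCard 2) : IsPartition (merge P Q) := by
  obtain ⟨hQP, hQcard⟩ := mem_powersetCard.1 hQ
  obtain ⟨C, hC⟩ := card_pos.1 (by omega : 0 < #Q)
  constructor
  · simp only [Coalescent.merge, mem_insert, mem_sdiff]
    rintro B (rfl | ⟨hB, -⟩)
    · exact (hP.nonempty C (hQP hC)).mono (le_sup (f := id) hC)
    · exact hP.nonempty B hB
  · rw [Coalescent.merge, coe_insert, coe_sdiff]
    refine (hP.pairwiseDisjoint.subset Set.sdiff_subset).insert fun B hB _ => ?_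
    refine Finset.disjoint_sup_left.2 fun C hC => hP.pairwiseDisjoint (hQP hC) hB.1 ?_
    rintro rfl
    exact hB.2 hC

lemma card_merge (hP : IsPartition P) (hQ : Q ∈ P.powersetCard 2) :
    #(Coalescent.merge P Q) + 1 = #P := by
  obtain ⟨hQP, hQcard⟩ := mem_powersetCard.1 hQ
  have hnot : Q.sup id ∉ P \ Q := fun h => hP.sup_notMem hQ (mem_sdiff.1 h).1
  rw [Coalescent.merge, card_insert_of_notMem hnot, card_sdiff_of_subset hQP, hQcard]
  have := card_le_card hQP
  omega

lemma sdiff_merge (hP : IsPartition P) (hQ : Q ∈ P.powersetCard 2) :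
    P \ Coalescent.merge P Q = Q := by
  have hQP := (mem_powersetCard.1 hQ).1
  ext B
  simp only [Coalescent.merge, mem_sdiff, mem_insert, not_or, not_and, not_not]
  constructor
  · rintro ⟨hB, -, h⟩
    exact h hB
  · intro hB
    refine ⟨hQP hB, ?_, fun _ => hB⟩
    rintro rfl
    exact hP.sup_notMem hQ (hQP hB)

end IsPartition

def blocksIn (A : Finset α) (P : Finset (Finset α)) : Finset (Finset α) := P.filter (· ⊆ A)

lemma blocksIn_subset {A : Finset α} {P : Finset (Finset α)} : blocksIn A P ⊆ P :=
  filter_subset _ _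

section Saturation

variable {A : Finset α} {P Q : Finset (Finset α)}

lemma IsPartition.blocksIn_of_mem (hP : IsPartition P) (hA : A ∈ P) : blocksIn A P = {A} := by
  ext B
  simp only [blocksIn, mem_filter, mem_singleton]
  constructor
  · rintro ⟨hB, hBA⟩
    exact hP.eq_of_subset hB hA hBA
  · rintro rfl
    exact ⟨hA, subset_rfl⟩

lemma IsSaturated.of_merge (h : IsSaturated A (merge P Q)) : IsSaturated A P := by
  intro B hB hBA
  by_cases hBQ : B ∈ Q
  · have hle : B ⊆ Q.sup id := le_sup (f := id) hBQ
    exact hle.trans (h _ (mem_insert_self _ _) fun hd => hBA (hd.mono_left hle))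
  · exact h B (mem_insert_of_mem (mem_sdiff.2 ⟨hB, hBQ⟩)) hBA

lemma IsSaturated.merge (h : IsSaturated A P) (hQ : ¬Disjoint (Q.sup id) A → Q.sup id ⊆ A) :
    IsSaturated A (Coalescent.merge P Q) := by
  rw [IsSaturated, Coalescent.merge, forall_mem_insert]
  exact ⟨hQ, fun B hB => h B (mem_sdiff.1 hB).1⟩

lemma IsSaturated.merge_of_subset_blocksIn (h : IsSaturated A P) (hQ : Q ⊆ blocksIn A P) :
    IsSaturated A (Coalescent.merge P Q) :=
  h.merge fun _ => Finset.sup_le fun _ hB => (mem_filter.1 (hQ hB)).2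

lemma IsSaturated.merge_of_subset_sdiff_blocksIn (h : IsSaturated A P)
    (hQ : Q ⊆ P \ blocksIn A P) : IsSaturated A (Coalescent.merge P Q) := by
  refine h.merge fun hd => absurd (Finset.disjoint_sup_left.2 fun B hB => ?_) hd
  obtain ⟨hBP, hBA⟩ := mem_sdiff.1 (hQ hB)
  by_contra hd'
  exact hBA (mem_filter.2 ⟨hBP, h B hBP hd'⟩)

lemma IsPartition.not_isSaturated_merge (hP : IsPartition P) (hQP : Q ⊆ P)
    (hQI : ¬Q ⊆ blocksIn A P) (hQO : ¬Q ⊆ P \ blocksIn A P) :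
    ¬IsSaturated A (Coalescent.merge P Q) := by
  obtain ⟨B, hBQ, hBO⟩ := not_subset.1 hQO
  obtain ⟨D, hDQ, hDI⟩ := not_subset.1 hQI
  have hBA : B ⊆ A := (mem_filter.1 (not_not.1 fun h => hBO (mem_sdiff.2 ⟨hQP hBQ, h⟩))).2
  have hDA : ¬D ⊆ A := fun h => hDI (mem_filter.2 ⟨hQP hDQ, h⟩)
  intro h
  have hBsup : B ⊆ Q.sup id := le_sup (f := id) hBQ
  have hmeet : ¬Disjoint (Q.sup id) A := fun hd =>
    (hP.nonempty B (hQP hBQ)).ne_empty (disjoint_self.1 ((hd.mono_left hBsup).mono_right hBA))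
  exact hDA ((le_sup (f := id) hDQ).trans (h _ (mem_insert_self _ _) hmeet))

lemma IsPartition.card_blocksIn_merge (hP : IsPartition P) (hQ : Q ∈ P.powersetCard 2)
    (hQA : Q ⊆ blocksIn A P) : #(blocksIn A (Coalescent.merge P Q)) + 1 = #(blocksIn A P) := by
  have hsupA : Q.sup id ⊆ A := Finset.sup_le fun _ hB => (mem_filter.1 (hQA hB)).2
  have heq : blocksIn A (Coalescent.merge P Q) = insert (Q.sup id) (blocksIn A P \ Q) := by
    ext B
    simp only [blocksIn, Coalescent.merge, mem_filter, mem_insert, mem_sdiff]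
    constructor
    · rintro ⟨rfl | ⟨hBP, hBQ⟩, hBA⟩
      exacts [Or.inl rfl, Or.inr ⟨⟨hBP, hBA⟩, hBQ⟩]
    · rintro (rfl | ⟨⟨hBP, hBA⟩, hBQ⟩)
      exacts [⟨Or.inl rfl, hsupA⟩, ⟨Or.inr ⟨hBP, hBQ⟩, hBA⟩]
  have hnot : Q.sup id ∉ blocksIn A P \ Q := fun h =>
    hP.sup_notMem hQ (mem_filter.1 (mem_sdiff.1 h).1).1
  rw [heq, card_insert_of_notMem hnot, card_sdiff_of_subset hQA, (mem_powersetCard.1 hQ).2]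
  have := card_le_card hQA
  rw [(mem_powersetCard.1 hQ).2] at this
  omega

lemma blocksIn_merge_of_subset_sdiff (hQ : Q ∈ P.powersetCard 2)
    (hQA : Q ⊆ P \ blocksIn A P) : blocksIn A (merge P Q) = blocksIn A P := by
  obtain ⟨C, hC⟩ := card_pos.1 (by rw [(mem_powersetCard.1 hQ).2]; omega : 0 < #Q)
  have hsupA : ¬Q.sup id ⊆ A := fun h => (mem_sdiff.1 (hQA hC)).2
    (mem_filter.2 ⟨(mem_sdiff.1 (hQA hC)).1, (le_sup (f := id) hC).trans h⟩)
  ext B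
  simp only [blocksIn, merge, mem_filter, mem_insert, mem_sdiff]
  constructor
  · rintro ⟨rfl | ⟨hBP, -⟩, hBA⟩
    exacts [absurd hBA hsupA, ⟨hBP, hBA⟩]
  · rintro ⟨hBP, hBA⟩
    refine ⟨Or.inr ⟨hBP, fun hBQ => ?_⟩, hBA⟩
    exact (mem_sdiff.1 (hQA hBQ)).2 (mem_filter.2 ⟨hBP, hBA⟩)

end Saturation

end Partition

section Singletons

variable {α : Type*} [DecidableEq α]

lemma isPartition_image_singleton (s : Finset α) : IsPartition (s.image singleton) := by
  refine ⟨fun B hB => ?_, fun B hB D hD hBD => ?_⟩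
  · obtain ⟨x, -, rfl⟩ := mem_image.1 hB
    exact singleton_nonempty x
  · obtain ⟨x, -, rfl⟩ := mem_image.1 (mem_coe.1 hB)
    obtain ⟨y, -, rfl⟩ := mem_image.1 (mem_coe.1 hD)
    exact disjoint_singleton.2 fun h => hBD (h ▸ rfl)

lemma isSaturated_image_singleton (A s : Finset α) : IsSaturated A (s.image singleton) := by
  intro B hB hBA
  obtain ⟨x, -, rfl⟩ := mem_image.1 hB
  exact singleton_subset_iff.2 (not_not.1 fun h => hBA (disjoint_singleton_left.2 h))

lemma blocksIn_image_singleton [Fintype α] (A : Finset α) :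
    blocksIn A (univ.image singleton) = A.image singleton := by
  ext B
  simp only [blocksIn, mem_filter, mem_image, mem_univ, true_and]
  constructor
  · rintro ⟨⟨x, rfl⟩, hx⟩
    exact ⟨x, singleton_subset_iff.1 hx, rfl⟩
  · rintro ⟨x, hx, rfl⟩
    exact ⟨⟨x, rfl⟩, singleton_subset_iff.2 hx⟩

end Singletons

section Histories

variable {α : Type*} [DecidableEq α]

/-- Histories started from an arbitrary partition `P` into `k` blocks, so that `IsHistory n` is
membership in `histories n` of the partition into singletons. -/
def histories (k : ℕ) (P : Finset (Finset α)) : Set (ℕ → Finset (Finset α)) :=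
  {c | (∀ m, m = 0 ∨ k < m → c m = ∅) ∧
    c k = P ∧
    ∀ m, 2 ≤ m → m ≤ k → ∃ B₁ ∈ c m, ∃ B₂ ∈ c m, B₁ ≠ B₂ ∧
      c (m - 1) = (c m \ {B₁, B₂}) ∪ {B₁ ∪ B₂}}

variable {k : ℕ} {A : Finset α} {P Q : Finset (Finset α)} {c c' : ℕ → Finset (Finset α)}

lemma exists_merge_of_mem_histories (hc : c ∈ histories k P) {m : ℕ} (h2 : 2 ≤ m)
    (hmk : m ≤ k) : ∃ Q ∈ (c m).powersetCard 2, c (m - 1) = merge (c m) Q := by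
  obtain ⟨B₁, hB₁, B₂, hB₂, hne, h⟩ := hc.2.2 m h2 hmk
  refine ⟨{B₁, B₂}, mem_powersetCard.2 ⟨?_, card_pair hne⟩, by rw [h, merge_pair]⟩
  simp [insert_subset_iff, hB₁, hB₂]

lemma IsPartition.of_mem_histories (hP : IsPartition P) (hc : c ∈ histories k P) {m : ℕ}
    (h1 : 1 ≤ m) (hmk : m ≤ k) : IsPartition (c m) := by
  revert h1
  induction hmk using Nat.decreasingInduction with
  | self => exact fun _ => hc.2.1 ▸ hP
  | of_succ m hmk ih =>
    intro h1
    obtain ⟨Q, hQ, h⟩ := exists_merge_of_mem_histories hc (m := m + 1) (by omega) hmk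
    rw [Nat.add_sub_cancel] at h
    exact h ▸ (ih (by omega)).merge hQ

lemma IsSaturated.of_mem_histories (hc : c ∈ histories k P) {m : ℕ} (h1 : 1 ≤ m)
    (hmk : m ≤ k) (hA : IsSaturated A (c m)) : IsSaturated A P := by
  revert h1 hA
  induction hmk using Nat.decreasingInduction with
  | self => exact fun _ hA => hc.2.1 ▸ hA
  | of_succ m hmk ih =>
    intro h1 hA
    obtain ⟨Q, -, h⟩ := exists_merge_of_mem_histories hc (m := m + 1) (by omega) hmk
    rw [Nat.add_sub_cancel] at h
    exact ih (by omega) (h ▸ hA).of_merge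

lemma notMem_of_not_isSaturated (hP : IsPartition P) (hA : ¬IsSaturated A P)
    (hc : c ∈ histories k P) (m : ℕ) : A ∉ c m := by
  intro hAm
  have hm : 1 ≤ m ∧ m ≤ k := by
    by_contra h
    rw [hc.1 m (by omega)] at hAm
    exact notMem_empty A hAm
  exact hA (((hP.of_mem_histories hc hm.1 hm.2).isSaturated_of_mem hAm).of_mem_histories
    hc hm.1 hm.2)

lemma update_empty_mem_histories (hc : c ∈ histories (k + 1) P) :
    Function.update c (k + 1) ∅ ∈ histories k (c k) := by
  refine ⟨fun m hm => ?_, by simp, fun m h2 hmk => ?_⟩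
  · by_cases hmk : m = k + 1
    · simp [hmk]
    · rw [Function.update_of_ne hmk]
      exact hc.1 m (by omega)
  · rw [Function.update_of_ne (by omega), Function.update_of_ne (by omega)]
    exact hc.2.2 m h2 (by omega)

lemma update_mem_histories_succ (hk : 1 ≤ k) (hQ : Q ∈ P.powersetCard 2)
    (hc' : c' ∈ histories k (merge P Q)) :
    Function.update c' (k + 1) P ∈ histories (k + 1) P := by
  obtain ⟨B₁, B₂, hne, rfl⟩ := card_eq_two.1 (mem_powersetCard.1 hQ).2
  have hB : B₁ ∈ P ∧ B₂ ∈ P := by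
    simpa [insert_subset_iff] using (mem_powersetCard.1 hQ).1
  refine ⟨fun m hm => ?_, by simp, fun m h2 hmk => ?_⟩
  · rw [Function.update_of_ne (by omega)]
    exact hc'.1 m (by omega)
  · rcases hmk.eq_or_lt with rfl | hmk
    · refine ⟨B₁, by simpa using hB.1, B₂, by simpa using hB.2, hne, ?_⟩
      rw [Function.update_self, Nat.add_sub_cancel, Function.update_of_ne (by omega), hc'.2.1,
        merge_pair]
    · rw [Function.update_of_ne (by omega), Function.update_of_ne (by omega)]
      exact hc'.2.2 m h2 (by omega)

lemma histories_one (P : Finset (Finset α)) :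
    histories 1 P = {Function.update (fun _ => ∅) 1 P} := by
  ext c
  constructor
  · intro hc
    funext m
    by_cases hm : m = 1
    · simp [hm, hc.2.1]
    · rw [Function.update_of_ne hm]
      exact hc.1 m (by omega)
  · rintro rfl
    refine ⟨fun m hm => ?_, by simp, fun m h2 hm => by omega⟩
    rw [Function.update_of_ne (by omega)]

variable [Finite α]

lemma histories_finite (k : ℕ) (P : Finset (Finset α)) : (histories k P).Finite := by
  refine Set.Finite.of_finite_image (f := fun c (j : Fin (k + 1)) => c j) (Set.toFinite _) ?_
  intro c₁ h₁ c₂ h₂ he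
  funext m
  by_cases hm : m ≤ k
  · simpa using congrFun he ⟨m, Nat.lt_succ_of_le hm⟩
  · rw [h₁.1 m (by omega), h₂.1 m (by omega)]

noncomputable def historyFinset (k : ℕ) (P : Finset (Finset α)) :
    Finset (ℕ → Finset (Finset α)) :=
  (histories_finite k P).toFinset

lemma mem_historyFinset : c ∈ historyFinset k P ↔ c ∈ histories k P :=
  Set.Finite.mem_toFinset _

lemma sum_historyFinset_succ {M : Type*} [AddCommMonoid M] (hk : 1 ≤ k) (hP : IsPartition P)
    (g : (ℕ → Finset (Finset α)) → M) :
    ∑ c ∈ historyFinset (k + 1) P, g c =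
      ∑ Q ∈ P.powersetCard 2, ∑ c' ∈ historyFinset k (merge P Q),
        g (Function.update c' (k + 1) P) := by
  rw [← sum_sigma (P.powersetCard 2) (fun Q => historyFinset k (merge P Q))
    (fun x => g (Function.update x.2 (k + 1) P))]
  symm
  refine sum_bij' (fun x _ => Function.update x.2 (k + 1) P)
    (fun c _ => ⟨P \ c k, Function.update c (k + 1) ∅⟩) ?_ ?_ ?_ ?_ (fun _ _ => rfl)
  · rintro ⟨Q, c'⟩ hx
    obtain ⟨hQ, hc'⟩ := mem_sigma.1 hx
    exact mem_historyFinset.2 (update_mem_histories_succ hk hQ (mem_historyFinset.1 hc'))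
  · intro c hc
    have hc := mem_historyFinset.1 hc
    obtain ⟨Q, hQ, h⟩ := exists_merge_of_mem_histories hc (m := k + 1) (by omega) le_rfl
    rw [Nat.add_sub_cancel, hc.2.1] at h
    rw [hc.2.1] at hQ
    rw [mem_sigma, h, hP.sdiff_merge hQ]
    exact ⟨hQ, mem_historyFinset.2 (h ▸ update_empty_mem_histories hc)⟩
  · rintro ⟨Q, c'⟩ hx
    simp only [mem_sigma, mem_historyFinset] at hx
    obtain ⟨hQ, hc'⟩ := hx
    have hk' : c' (k + 1) = ∅ := hc'.1 (k + 1) (by omega)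
    dsimp only
    rw [Function.update_idem, ← hk', Function.update_eq_self,
      Function.update_of_ne (by omega : k ≠ k + 1), hc'.2.1, hP.sdiff_merge hQ]
  · intro c hc
    have hc := mem_historyFinset.1 hc
    rw [Function.update_idem, ← hc.2.1, Function.update_eq_self]

def numHistories (k : ℕ) : ℕ := ∏ m ∈ Icc 2 k, m.choose 2

lemma numHistories_pos (k : ℕ) : 0 < numHistories k :=
  prod_pos fun _ hm => Nat.choose_pos (mem_Icc.1 hm).1

lemma numHistories_succ {k : ℕ} (hk : 1 ≤ k) :
    numHistories (k + 1) = (k + 1).choose 2 * numHistories k := by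
  rw [numHistories, prod_Icc_succ_top (by omega), mul_comm, numHistories]

lemma card_historyFinset (hP : IsPartition P) (hk : 1 ≤ k) (hcard : #P = k) :
    #(historyFinset k P) = numHistories k := by
  induction k, hk using Nat.le_induction generalizing P with
  | base =>
    rw [historyFinset, ← Set.ncard_eq_toFinset_card _ (histories_finite 1 P), histories_one,
      Set.ncard_singleton]
    rfl
  | succ k hk ih =>
    rw [card_eq_sum_ones, sum_historyFinset_succ hk hP, numHistories_succ hk,
      ← hcard, ← card_powersetCard 2 P, card_eq_sum_ones, sum_mul, one_mul]
    refine sum_congr rfl fun Q hQ => ?_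
    rw [← card_eq_sum_ones]
    exact ih (hP.merge hQ) (by have := hP.card_merge hQ; omega)

end Histories

section Levels

variable {n k : ℕ} {A : Finset (Fin n)} {P : Finset (Finset (Fin n))}
  {c : ℕ → Finset (Finset (Fin n))}

lemma KLevel_le (h : ∀ m, k < m → A ∉ c m) : KLevel A c ≤ k :=
  csSup_le' fun m hm => not_lt.1 fun hkm => h m hkm hm

lemma KLevel_eq (hk : A ∈ c k) (h : ∀ m, k < m → A ∉ c m) : KLevel A c = k :=
  IsGreatest.csSup_eq ⟨hk, fun m hm => not_lt.1 fun hkm => h m hkm hm⟩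

lemma JLevel_eq_zero_of_forall_notMem (h : ∀ m, A ∉ c m) : JLevel A c = 0 := by
  have hK : KLevel A c = 0 := Nat.le_zero.1 (KLevel_le fun m _ => h m)
  refine Nat.le_zero.1 (csSup_le' fun j hj => ?_)
  rw [Set.mem_ofPred_eq, hK] at hj
  exact absurd hj.1 (Nat.not_lt_zero j)

lemma JLevel_update_of_forall_notMem (hAP : A ∈ P) (h : ∀ m, A ∉ c m) :
    JLevel A (Function.update c (k + 1) P) = k := by
  have hK : KLevel A (Function.update c (k + 1) P) = k + 1 :=
    KLevel_eq (by simpa using hAP) fun m hm => by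
      rw [Function.update_of_ne (by omega)]
      exact h m
  rw [JLevel, hK]
  refine IsGreatest.csSup_eq ⟨⟨k.lt_succ_self, ?_⟩, fun j hj => Nat.le_of_lt_succ hj.1⟩
  rw [Function.update_of_ne (by omega)]
  exact h k

lemma JLevel_update_eq (hc : ∀ m, k < m → A ∉ c m) (hAP : A ∈ P → A ∈ c k) :
    JLevel A (Function.update c (k + 1) P) = JLevel A c := by
  by_cases hA : A ∈ P
  · have hKc : KLevel A c = k := KLevel_eq (hAP hA) hc
    have hK : KLevel A (Function.update c (k + 1) P) = k + 1 :=
      KLevel_eq (by simpa using hA) fun m hm => by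
        rw [Function.update_of_ne (by omega)]
        exact hc m (by omega)
    rw [JLevel, JLevel, hK, hKc]
    congr 1
    ext j
    simp only [Set.mem_ofPred_eq]
    constructor
    · rintro ⟨hj, hjA⟩
      rw [Function.update_of_ne (by omega)] at hjA
      refine ⟨lt_of_le_of_ne (Nat.le_of_lt_succ hj) ?_, hjA⟩
      rintro rfl
      exact hjA (hAP hA)
    · rintro ⟨hj, hjA⟩
      exact ⟨by omega, by rwa [Function.update_of_ne (by omega)]⟩
  · have hK : KLevel A (Function.update c (k + 1) P) = KLevel A c := by
      rw [KLevel, KLevel]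
      congr 1
      ext m
      by_cases hm : m = k + 1
      · subst hm
        simp [hA, hc (k + 1) (by omega)]
      · simp [Function.update_of_ne hm]
    have hKk : KLevel A c ≤ k := KLevel_le hc
    rw [JLevel, JLevel, hK]
    congr 1
    ext j
    simp only [Set.mem_ofPred_eq]
    exact and_congr_right fun hj => by rw [Function.update_of_ne (by omega)]

end Levels

/-- A consequence of `b C(k+1,b) = (k+1) C(k,b-1)` and `(k+1-b) C(k+1,b) = (k+1) C(k,b)`. -/
lemma choose_two_div_add_choose_two_div {k b : ℕ} (hb : 1 ≤ b) (hbk : b ≤ k) :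
    (b.choose 2 : ℝ) * (2 / k.choose (b - 1)) + ((k + 1 - b).choose 2 : ℝ) * (2 / k.choose b) =
      ((k : ℝ) - 1) * (k + 1) / (k + 1).choose b := by
  have hx : (0 : ℝ) < k.choose (b - 1) := by exact_mod_cast Nat.choose_pos (by omega)
  have hy : (0 : ℝ) < k.choose b := by exact_mod_cast Nat.choose_pos hbk
  have hz : (0 : ℝ) < (k + 1).choose b := by exact_mod_cast Nat.choose_pos (by omega)
  have h₁ : ((k : ℝ) + 1) * k.choose (b - 1) = (k + 1).choose b * b := by
    have := Nat.add_one_mul_choose_eq k (b - 1)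
    rw [Nat.sub_add_cancel hb] at this
    exact_mod_cast this
  have h₂ : (k.choose b : ℝ) * (k + 1) = (k + 1).choose b * ((k : ℝ) + 1 - b) := by
    have h := congrArg (Nat.cast (R := ℝ)) (Nat.choose_mul_succ_eq k b)
    push_cast [Nat.cast_sub (by omega : b ≤ k + 1)] at h
    exact h
  rw [Nat.cast_choose_two, Nat.cast_choose_two, Nat.cast_sub (by omega : b ≤ k + 1)]
  push_cast
  field_simp
  linear_combination (1 - (b : ℝ)) * k.choose b * h₁ + ((b : ℝ) - k) * k.choose (b - 1) * h₂

section Bound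

variable {n k : ℕ} {A : Finset (Fin n)} {P Q : Finset (Finset (Fin n))}

noncomputable def sumInvJLevel (A : Finset (Fin n)) (k : ℕ) (P : Finset (Finset (Fin n))) : ℝ :=
  ∑ c ∈ historyFinset k P, (JLevel A c : ℝ)⁻¹

lemma card_filter_mem_div_le (hP : IsPartition P) (hcard : #P = k + 1) :
    (#((P.powersetCard 2).filter (A ∈ ·)) : ℝ) / k ≤
      (k + 1) / (k + 1).choose #(blocksIn A P) := by
  by_cases hA : A ∈ P
  · rw [hP.blocksIn_of_mem hA, card_singleton, Nat.choose_one_right, Nat.cast_add_one,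
      div_self (by positivity)]
    have := card_filter_mem_le hA
    rw [hcard, Nat.add_sub_cancel] at this
    exact div_le_one_of_le₀ (by exact_mod_cast this) (Nat.cast_nonneg k)
  · rw [filter_false_of_mem fun Q hQ hAQ => hA ((mem_powersetCard.1 hQ).1 hAQ), card_empty,
      Nat.cast_zero, zero_div]
    positivity

lemma sumInvJLevel_eq_zero (hP : IsPartition P) (hA : ¬IsSaturated A P) : sumInvJLevel A k P = 0 :=
  sum_eq_zero fun c hc => by
    rw [JLevel_eq_zero_of_forall_notMem (notMem_of_not_isSaturated hP hA (mem_historyFinset.1 hc)),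
      Nat.cast_zero, inv_zero]

lemma sum_inv_JLevel_update_of_notMem (hAQ : A ∉ Q) :
    ∑ c ∈ historyFinset k (merge P Q), (JLevel A (Function.update c (k + 1) P) : ℝ)⁻¹ =
      sumInvJLevel A k (merge P Q) := by
  refine sum_congr rfl fun c hc => ?_
  have hc := mem_historyFinset.1 hc
  rw [JLevel_update_eq (fun m hm => by simp [hc.1 m (Or.inr hm)])
    fun hA => hc.2.1 ▸ mem_insert_of_mem (mem_sdiff.2 ⟨hA, hAQ⟩)]

lemma sum_inv_JLevel_update_of_mem (hk : 1 ≤ k) (hP : IsPartition P) (hcard : #P = k + 1)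
    (hQ : Q ∈ P.powersetCard 2) (hAQ : A ∈ Q) :
    ∑ c ∈ historyFinset k (merge P Q), (JLevel A (Function.update c (k + 1) P) : ℝ)⁻¹ =
      numHistories k / k := by
  obtain ⟨hQP, hQcard⟩ := mem_powersetCard.1 hQ
  obtain ⟨C, hC, hCA⟩ := exists_mem_ne (by omega : 1 < #Q) A
  have hnot : ¬IsSaturated A (merge P Q) := by
    refine hP.not_isSaturated_merge hQP (fun h => hCA ?_) fun h => ?_
    · exact hP.eq_of_subset (hQP hC) (hQP hAQ) (mem_filter.1 (h hC)).2
    · exact (mem_sdiff.1 (h hAQ)).2 (mem_filter.2 ⟨hQP hAQ, subset_rfl⟩)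
  rw [sum_congr rfl fun c hc => by rw [JLevel_update_of_forall_notMem (hQP hAQ)
      (notMem_of_not_isSaturated (hP.merge hQ) hnot (mem_historyFinset.1 hc))],
    sum_const, card_historyFinset (hP.merge hQ) hk (by have := hP.card_merge hQ; omega),
    nsmul_eq_mul, div_eq_mul_inv]

/-- Bound on the contribution to `sumInvJLevel A (k + 1) P` of the histories whose first merger
joins the two blocks in `Q`. -/
noncomputable def mergeBound (A : Finset (Fin n)) (k : ℕ) (P Q : Finset (Finset (Fin n))) : ℝ :=
  (if A ∈ Q then (numHistories k : ℝ) / k else 0) +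
    (if Q ⊆ blocksIn A P then 2 / (k.choose (#(blocksIn A P) - 1) : ℝ) * numHistories k
      else 0) +
    (if Q ⊆ P \ blocksIn A P then 2 / (k.choose #(blocksIn A P) : ℝ) * numHistories k else 0)

lemma sum_mergeBound_le (hk : 1 ≤ k) (hP : IsPartition P) (hcard : #P = k + 1)
    (hb : 1 ≤ #(blocksIn A P)) (hbk : #(blocksIn A P) ≤ k) :
    ∑ Q ∈ P.powersetCard 2, mergeBound A k P Q ≤
      2 / (k + 1).choose #(blocksIn A P) * numHistories (k + 1) := by
  set b := #(blocksIn A P)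
  have hN : (0 : ℝ) ≤ numHistories k := Nat.cast_nonneg _
  have hout : #(P \ blocksIn A P) = k + 1 - b := by
    rw [card_sdiff_of_subset blocksIn_subset, hcard]
  have hin := card_filter_subset_le P (blocksIn A P) 2
  have hout' := card_filter_subset_le P (P \ blocksIn A P) 2
  rw [hout] at hout'
  simp only [mergeBound, sum_add_distrib, ← sum_filter, sum_const, nsmul_eq_mul]
  calc _ ≤ (k + 1) / (k + 1).choose b * numHistories k +
        (b.choose 2 : ℝ) * (2 / k.choose (b - 1) * numHistories k) +
        ((k + 1 - b).choose 2 : ℝ) * (2 / k.choose b * numHistories k) := by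
        refine add_le_add (add_le_add ?_ ?_) ?_
        · rw [mul_div, mul_comm, ← mul_div, mul_comm]
          exact mul_le_mul_of_nonneg_right (card_filter_mem_div_le hP hcard) hN
        · exact mul_le_mul_of_nonneg_right (by exact_mod_cast hin) (by positivity)
        · exact mul_le_mul_of_nonneg_right (by exact_mod_cast hout') (by positivity)
    _ = 2 / (k + 1).choose b * numHistories (k + 1) := by
        rw [← mul_assoc, ← mul_assoc, ← add_mul, ← add_mul, add_assoc,
          choose_two_div_add_choose_two_div hb hbk, numHistories_succ hk, Nat.cast_mul,
          Nat.cast_choose_two]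
        push_cast
        field_simp
        ring

lemma sum_inv_JLevel_update_le_mergeBound (hk : 1 ≤ k) (hP : IsPartition P)
    (hcard : #P = k + 1) (hA : IsSaturated A P) (hb : 1 ≤ #(blocksIn A P))
    (hbk : #(blocksIn A P) ≤ k) (hQ : Q ∈ P.powersetCard 2)
    (ih : ∀ {P' : Finset (Finset (Fin n))}, IsPartition P' → #P' = k → IsSaturated A P' →
      1 ≤ #(blocksIn A P') → #(blocksIn A P') < k →
      sumInvJLevel A k P' ≤ 2 / k.choose #(blocksIn A P') * numHistories k) :
    ∑ c ∈ historyFinset k (merge P Q), (JLevel A (Function.update c (k + 1) P) : ℝ)⁻¹ ≤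
      mergeBound A k P Q := by
  obtain ⟨hQP, hQcard⟩ := mem_powersetCard.1 hQ
  unfold mergeBound
  by_cases hAQ : A ∈ Q
  · rw [sum_inv_JLevel_update_of_mem hk hP hcard hQ hAQ, if_pos hAQ, add_assoc]
    exact le_add_of_nonneg_right (by positivity)
  rw [sum_inv_JLevel_update_of_notMem hAQ, if_neg hAQ, zero_add]
  have hmerge := hP.merge hQ
  have hcard' : #(merge P Q) = k := by have := hP.card_merge hQ; omega
  by_cases hQI : Q ⊆ blocksIn A P
  · have hb' := hP.card_blocksIn_merge hQ hQI
    have hb2 : 2 ≤ #(blocksIn A P) := hQcard ▸ card_le_card hQI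
    rw [if_pos hQI]
    refine le_add_of_le_of_nonneg ?_ (by positivity)
    have := ih hmerge hcard' (hA.merge_of_subset_blocksIn hQI) (by omega) (by omega)
    rwa [show #(blocksIn A (merge P Q)) = #(blocksIn A P) - 1 by omega] at this
  by_cases hQO : Q ⊆ P \ blocksIn A P
  · have hbk' : #(blocksIn A P) + 2 ≤ k + 1 := by
      rw [← hQcard, ← hcard,
        ← card_union_of_disjoint (disjoint_of_subset_right hQO disjoint_sdiff)]
      exact card_le_card (union_subset blocksIn_subset hQP)
    rw [if_neg hQI, if_pos hQO, zero_add]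
    have := ih hmerge hcard' (hA.merge_of_subset_sdiff_blocksIn hQO)
    rw [blocksIn_merge_of_subset_sdiff hQ hQO] at this
    exact this hb (by omega)
  · rw [sumInvJLevel_eq_zero hmerge (hP.not_isSaturated_merge hQP hQI hQO)]
    positivity

theorem sumInvJLevel_le (hP : IsPartition P) (hcard : #P = k) (hA : IsSaturated A P)
    (hb : 1 ≤ #(blocksIn A P)) (hbk : #(blocksIn A P) < k) :
    sumInvJLevel A k P ≤ 2 / k.choose #(blocksIn A P) * numHistories k := by
  induction k generalizing P with
  | zero => omega
  | succ k ih =>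
    have hk : 1 ≤ k := by omega
    calc sumInvJLevel A (k + 1) P
        = ∑ Q ∈ P.powersetCard 2, ∑ c ∈ historyFinset k (merge P Q),
            (JLevel A (Function.update c (k + 1) P) : ℝ)⁻¹ := sum_historyFinset_succ hk hP _
      _ ≤ ∑ Q ∈ P.powersetCard 2, mergeBound A k P Q :=
          sum_le_sum fun Q hQ =>
            sum_inv_JLevel_update_le_mergeBound hk hP hcard hA hb (by omega) hQ ih
      _ ≤ 2 / (k + 1).choose #(blocksIn A P) * numHistories (k + 1) :=
          sum_mergeBound_le hk hP hcard hb (by omega)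

end Bound

end Coalescent

open Coalescent in
/-- Expected reciprocal of the final level: `E(1/J_A) ≤ 2/C(n,i)` (with `1/J_A = 0` on
`{J_A = ∞}`, i.e. when no branch supports exactly the leaves in `A`). -/
theorem stmt10 (n i : ℕ) (A : Finset (Fin n)) (hA : A.card = i)
    (hi : 1 ≤ i) (hin : i ≤ n - 1) :
    histExp n (fun c => ((JLevel A c : ℝ))⁻¹) ≤ 2 / (n.choose i : ℝ) := by
  set P₀ : Finset (Finset (Fin n)) := univ.image singleton
  have hP₀ : IsPartition P₀ := isPartition_image_singleton _
  have hcard : #P₀ = n := by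
    rw [card_image_of_injective _ singleton_injective, card_univ, Fintype.card_fin]
  have hb : #(blocksIn A P₀) = i := by
    rw [blocksIn_image_singleton, card_image_of_injective _ singleton_injective, hA]
  have hhist : {c | IsHistory n c} = ↑(historyFinset n P₀) :=
    (Set.Finite.coe_toFinset _).symm
  have hbound := sumInvJLevel_le hP₀ hcard (isSaturated_image_singleton A _) (by omega) (by omega)
  rw [hb] at hbound
  rw [histExp, hhist, finsum_mem_coe_finset, Set.ncard_coe_finset,
    card_historyFinset hP₀ (by omega) hcard,
    div_le_iff₀ (by exact_mod_cast numHistories_pos n)]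
  exact hbound
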